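/- arXiv:0908.0207 — 3 statements merged into one kernel-verified Lean document; each statement's English description precedes it below -/
import Mathlib

section
/- Let γ : ℝ → ℝ be continuous. Define γ̄ : ℝ² → ℝ² by γ̄(x) = (1/(2π)) ∫₀^{2π} (-sin φ, cos φ) · γ(⟨(-sin φ, cos φ), x⟩) dφ, where ⟨·,·⟩ is the Euclidean inner product. Then for every nonzero x ∈ ℝ², γ̄(x) = ρ(|x|) · x/|x|, where ρ(r) = (1/(2π)) ∫₀^{2π} γ(r·sin φ)·sin φ dφ. -/
/-! Write `x = r (cos θ, sin θ)`. Then `⟪(-sin φ, cos φ), x⟫ = r sin (θ - φ)`, and the substitution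
`ψ = θ - φ`, harmless over a full period, together with
`(-sin (θ - ψ), cos (θ - ψ)) = sin ψ (cos θ, sin θ) + cos ψ (-sin θ, cos θ)` splits the average into a
radial part, which is `ρ(r) (cos θ, sin θ)`, and a tangential part `∫ γ(r sin ψ) cos ψ dψ`, which
vanishes after the substitution `t = sin ψ` since `sin 0 = sin 2π`. -/

open Real

noncomputable def vec2 (a b : ℝ) : EuclideanSpace ℝ (Fin 2) := WithLp.toLp 2 ![a, b]

/-- The averaged gain. -/
noncomputable def rho (γ : ℝ → ℝ) (r : ℝ) : ℝ :=
  (1 / (2 * π)) * ∫ φ in (0:ℝ)..(2 * π), γ (r * Real.sin φ) * Real.sin φ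

/-- The averaged coupling function. -/
noncomputable def gbar (γ : ℝ → ℝ) (x : EuclideanSpace ℝ (Fin 2)) : EuclideanSpace ℝ (Fin 2) :=
  (1 / (2 * π)) • ∫ φ in (0:ℝ)..(2 * π),
    γ (inner ℝ (vec2 (-Real.sin φ) (Real.cos φ)) x : ℝ) • vec2 (-Real.sin φ) (Real.cos φ)

theorem Function.Periodic.intervalIntegral_comp_sub_left {E : Type*} [NormedAddCommGroup E]
    [NormedSpace ℝ E] {f : ℝ → E} {T : ℝ} (hf : Function.Periodic f T) (a d : ℝ) :
    ∫ x in a..a + T, f (d - x) = ∫ x in a..a + T, f x := by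
  rw [intervalIntegral.integral_comp_sub_left, ← hf.intervalIntegral_add_eq (d - (a + T)) a,
    sub_add_eq_sub_sub, sub_add_cancel]

theorem integral_comp_mul_sin_mul_cos {γ : ℝ → ℝ} (hγ : Continuous γ) (r a b : ℝ) :
    ∫ φ in a..b, γ (r * sin φ) * cos φ = ∫ t in sin a..sin b, γ (r * t) :=
  intervalIntegral.integral_comp_mul_deriv (g := fun t => γ (r * t))
    (fun φ _ => hasDerivAt_sin φ) continuous_cos.continuousOn (by fun_prop)

theorem inner_vec2 (a b c d : ℝ) : inner ℝ (vec2 a b) (vec2 c d) = a * c + b * d := by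
  simp [vec2, PiLp.inner_apply, Fin.sum_univ_two, mul_comm]

theorem smul_vec2 (r a b : ℝ) : r • vec2 a b = vec2 (r * a) (r * b) := by
  ext i; fin_cases i <;> simp [vec2]

theorem exists_eq_norm_smul_vec2_cos_sin (x : EuclideanSpace ℝ (Fin 2)) :
    ∃ θ, x = ‖x‖ • vec2 (cos θ) (sin θ) := by
  set z : ℂ := ⟨x 0, x 1⟩
  have hz : ‖z‖ = ‖x‖ := by
    simp [Complex.norm_def, Complex.normSq_mk, EuclideanSpace.norm_eq, Fin.sum_univ_two, z, ← sq]
  refine ⟨z.arg, ?_⟩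
  rw [smul_vec2, ← hz, Complex.norm_mul_cos_arg, Complex.norm_mul_sin_arg]
  ext i; fin_cases i <;> rfl

theorem vec2_neg_sin_sub_cos_sub (θ ψ : ℝ) :
    vec2 (-sin (θ - ψ)) (cos (θ - ψ)) =
      sin ψ • vec2 (cos θ) (sin θ) + cos ψ • vec2 (-sin θ) (cos θ) := by
  ext i; fin_cases i <;> simp [vec2, sin_sub, cos_sub] <;> ring

theorem gbar_smul_vec2_cos_sin {γ : ℝ → ℝ} (hγ : Continuous γ) (r θ : ℝ) :
    gbar γ (r • vec2 (cos θ) (sin θ)) = rho γ r • vec2 (cos θ) (sin θ) := by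
  have hinner : ∀ φ, inner ℝ (vec2 (-sin φ) (cos φ)) (r • vec2 (cos θ) (sin θ)) =
      r * sin (θ - φ) := fun φ => by
    rw [smul_vec2, inner_vec2, sin_sub]; ring
  have hperiodic : Function.Periodic
      (fun ψ => γ (r * sin ψ) • vec2 (-sin (θ - ψ)) (cos (θ - ψ))) (2 * π) := fun ψ => by
    simp only [sin_add_two_pi, ← sub_sub, sin_sub_two_pi, cos_sub_two_pi]
  have hshift := hperiodic.intervalIntegral_comp_sub_left 0 θ
  simp only [zero_add, sub_sub_cancel] at hshift
  rw [gbar, rho]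
  simp_rw [hinner, hshift, vec2_neg_sin_sub_cos_sub, smul_add, smul_smul]
  rw [intervalIntegral.integral_add, intervalIntegral.integral_smul_const,
    intervalIntegral.integral_smul_const, integral_comp_mul_sin_mul_cos hγ]
  · simp only [sin_zero, sin_two_pi, intervalIntegral.integral_same, zero_smul, add_zero, smul_smul]
  all_goals exact (by fun_prop : Continuous _).intervalIntegrable _ _

theorem stmt_2 (γ : ℝ → ℝ) (hγ : Continuous γ) (x : EuclideanSpace ℝ (Fin 2)) (hx : x ≠ 0) :
    gbar γ x = rho γ ‖x‖ • ‖x‖⁻¹ • x := by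
  obtain ⟨θ, hθ⟩ := exists_eq_norm_smul_vec2_cos_sin x
  have hunit : ‖x‖⁻¹ • x = vec2 (cos θ) (sin θ) := by
    rw [inv_smul_eq_iff₀ (norm_ne_zero_iff.mpr hx)]
    exact hθ
  conv_lhs => rw [hθ]
  rw [gbar_smul_vec2_cos_sin hγ, hunit]
end

section
/- Let ρ : ℝ≥0 → ℝ≥0 be continuous with ρ(0) = 0 and ρ(r) > 0 for r > 0. Consider the planar two-agent average system η₁' = ρ(|η₂ − η₁|)(η₂ − η₁)/|η₂ − η₁|, η₂' = 0 (with the right-hand side of η₁' defined as 0 when η₁ = η₂). Then along any solution on [0, ∞), the distance |η₂(t) − η₁(t)| is nonincreasing and tends to 0 as t → ∞. -/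
/-!
Write `w = η₂ - η₁`, so that `w' = -ρ(‖w‖) w / ‖w‖`. Then `(‖w‖²)' = -2 ρ(‖w‖) ‖w‖ ≤ 0`, so `‖w‖`
is nonincreasing. If `‖w‖` stayed above some `ε > 0`, then by compactness `ρ ≥ m > 0` on
`[ε, ‖w 0‖]`, so `‖w‖²` would decrease at least at the constant rate `2 m ε` and eventually
become negative.
-/

open Filter Topology

lemma sub_le_mul_sub_of_hasDerivAt_le {F F' : ℝ → ℝ} {C : ℝ}
    (hF : ∀ t, 0 ≤ t → HasDerivAt F (F' t) t) (hF' : ∀ t, 0 ≤ t → F' t ≤ C)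
    {s t : ℝ} (hs : 0 ≤ s) (hst : s ≤ t) : F t - F s ≤ C * (t - s) := by
  refine (convex_Ici 0).image_sub_le_mul_sub_of_deriv_le
    (fun x hx => (hF x hx).continuousAt.continuousWithinAt)
    (fun x hx => (hF x (interior_subset hx)).differentiableAt.differentiableWithinAt)
    (fun x hx => ?_) s hs t (hs.trans hst) hst
  rw [(hF x (interior_subset hx)).deriv]
  exact hF' x (interior_subset hx)

section Radial

variable {E : Type*} [NormedAddCommGroup E] [InnerProductSpace ℝ E] {ρ : ℝ → ℝ} {w : ℝ → E}

lemma HasDerivAt.norm_sq_of_radial {t : ℝ}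
    (hw : HasDerivAt w (-(ρ ‖w t‖ • ‖w t‖⁻¹ • w t)) t) :
    HasDerivAt (‖w ·‖ ^ 2) (-(2 * ρ ‖w t‖ * ‖w t‖)) t := by
  refine hw.norm_sq.congr_deriv ?_
  rw [inner_neg_right, real_inner_smul_right, real_inner_smul_right, real_inner_self_eq_norm_sq]
  rcases eq_or_ne ‖w t‖ 0 with h | h
  · simp [h]
  · field_simp

lemma antitoneOn_norm_of_radial (hρpos : ∀ r : ℝ, 0 < r → 0 < ρ r)
    (hw : ∀ t, 0 ≤ t → HasDerivAt w (-(ρ ‖w t‖ • ‖w t‖⁻¹ • w t)) t) :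
    AntitoneOn (‖w ·‖) (Set.Ici 0) := by
  have hslope : ∀ t, 0 ≤ t → -(2 * ρ ‖w t‖ * ‖w t‖) ≤ 0 := by
    intro t _
    rcases (norm_nonneg (w t)).eq_or_lt with h | h
    · simp [← h]
    · have := hρpos _ h
      nlinarith
  intro s hs t ht hst
  have h := sub_le_mul_sub_of_hasDerivAt_le (fun t ht => (hw t ht).norm_sq_of_radial) hslope hs hst
  rw [zero_mul, sub_nonpos] at h
  exact (pow_le_pow_iff_left₀ (norm_nonneg _) (norm_nonneg _) two_ne_zero).1 h

lemma tendsto_norm_of_radial (hρc : ContinuousOn ρ (Set.Ici 0))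
    (hρpos : ∀ r : ℝ, 0 < r → 0 < ρ r)
    (hw : ∀ t, 0 ≤ t → HasDerivAt w (-(ρ ‖w t‖ • ‖w t‖⁻¹ • w t)) t) :
    Tendsto (‖w ·‖) atTop (𝓝 0) := by
  have hanti := antitoneOn_norm_of_radial hρpos hw
  refine tendsto_order.2
    ⟨fun a ha => .of_forall fun t => ha.trans_le (norm_nonneg _), fun ε hε => ?_⟩
  by_contra hfreq
  have hge : ∀ t, 0 ≤ t → ε ≤ ‖w t‖ := by
    intro t ht
    obtain ⟨s, hts, hs⟩ := frequently_atTop.1 (not_eventually.1 hfreq) t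
    exact (not_lt.1 hs).trans (hanti ht (ht.trans hts) hts)
  obtain ⟨r, ⟨hεr, -⟩, hr⟩ := isCompact_Icc.exists_isMinOn (Set.nonempty_Icc.2 (hge 0 le_rfl))
    (hρc.mono fun x hx => hε.le.trans hx.1)
  have hm : 0 < ρ r := hρpos r (hε.trans_le hεr)
  have hslope : ∀ t, 0 ≤ t → -(2 * ρ ‖w t‖ * ‖w t‖) ≤ -(2 * ρ r * ε) := by
    intro t ht
    have : ρ r ≤ ρ ‖w t‖ := hr ⟨hge t ht, hanti Set.self_mem_Ici ht ht⟩
    nlinarith [hge t ht]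
  set T := (‖w 0‖ ^ 2 + 1) / (2 * ρ r * ε)
  have hdrop : -(2 * ρ r * ε) * (T - 0) = -(‖w 0‖ ^ 2 + 1) := by
    simp only [T, sub_zero]
    field_simp
  have h := sub_le_mul_sub_of_hasDerivAt_le (fun t ht => (hw t ht).norm_sq_of_radial) hslope
    le_rfl (by positivity : 0 ≤ T)
  nlinarith [sq_nonneg ‖w T‖]

end Radial

theorem stmt_15_general (ρ : ℝ → ℝ) (hρc : ContinuousOn ρ (Set.Ici 0))
    (hρpos : ∀ r : ℝ, 0 < r → 0 < ρ r)
    (η₁ η₂ : ℝ → EuclideanSpace ℝ (Fin 2))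
    (h₁ : ∀ t, 0 ≤ t → HasDerivAt η₁
      (ρ ‖η₂ t - η₁ t‖ • ‖η₂ t - η₁ t‖⁻¹ • (η₂ t - η₁ t)) t)
    (h₂ : ∀ t, 0 ≤ t → HasDerivAt η₂ 0 t) :
    AntitoneOn (fun t => ‖η₂ t - η₁ t‖) (Set.Ici 0) ∧
    Tendsto (fun t => ‖η₂ t - η₁ t‖) atTop (nhds 0) := by
  have hw : ∀ t, 0 ≤ t → HasDerivAt (fun t => η₂ t - η₁ t)
      (-(ρ ‖η₂ t - η₁ t‖ • ‖η₂ t - η₁ t‖⁻¹ • (η₂ t - η₁ t))) t := fun t ht => by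
    simpa using (h₂ t ht).fun_sub (h₁ t ht)
  exact ⟨antitoneOn_norm_of_radial hρpos hw, tendsto_norm_of_radial hρc hρpos hw⟩

theorem stmt_15 (ρ : ℝ → ℝ) (hρc : ContinuousOn ρ (Set.Ici 0)) (hρ0 : ρ 0 = 0)
    (hρpos : ∀ r : ℝ, 0 < r → 0 < ρ r) (hρnn : ∀ r : ℝ, 0 ≤ r → 0 ≤ ρ r)
    (η₁ η₂ : ℝ → EuclideanSpace ℝ (Fin 2))
    (h₁ : ∀ t, 0 ≤ t → HasDerivAt η₁
      (ρ ‖η₂ t - η₁ t‖ • ‖η₂ t - η₁ t‖⁻¹ • (η₂ t - η₁ t)) t)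
    (h₂ : ∀ t, 0 ≤ t → HasDerivAt η₂ 0 t) :
    AntitoneOn (fun t => ‖η₂ t - η₁ t‖) (Set.Ici 0) ∧
    Tendsto (fun t => ‖η₂ t - η₁ t‖) atTop (nhds 0) :=
  stmt_15_general ρ hρc hρpos η₁ η₂ h₁ h₂
end

section
/- Let F : (ℝ²)^p → (ℝ²)^p be given by F(η)ᵢ = Σ_{j≠i} ρᵢⱼ(|ηⱼ − ηᵢ|)(ηⱼ − ηᵢ)/|ηⱼ − ηᵢ| with each ρᵢⱼ : ℝ≥0 → ℝ≥0 continuous, ρᵢⱼ(0) = 0. Then along any differentiable solution η(t) of η' = F(η), the quantity D(t) = max_{i,j} |ηᵢ(t) − ηⱼ(t)| is nonincreasing, i.e., the convex hull of the agents' states is shrinking: for all t ≥ s ≥ 0, max_{i,j}|ηᵢ(t) − ηⱼ(t)| ≤ max_{i,j}|ηᵢ(s) − ηⱼ(s)|. -/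
/-!
Work with the squared distances `‖ηᵢ - ηⱼ‖²`. If the pair `(i, j)` realises the diameter, every
other agent `ηₖ` lies in the lens `‖ηₖ - ηⱼ‖ ≤ ‖ηᵢ - ηⱼ‖`, `‖ηₖ - ηᵢ‖ ≤ ‖ηᵢ - ηⱼ‖`, so each pull
`ηₖ - ηᵢ` on `ηᵢ` has a nonpositive component along `ηᵢ - ηⱼ`, and symmetrically for `ηⱼ`. Hence
the derivative of every active squared distance is `≤ 0`, and a finite maximum of differentiable
functions whose active members are nonincreasing is itself nonincreasing.
-/

open Filter Set Topology Finset

section MaxOfFunctions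

variable {ι : Type*} [Fintype ι] [Nonempty ι]

lemma frequently_slope_sup'_lt {f : ι → ℝ → ℝ} {f' : ι → ℝ} {x : ℝ}
    (hd : ∀ i, HasDerivAt (f i) (f' i) x) (hmax : ∀ i, (∀ j, f j x ≤ f i x) → f' i ≤ 0)
    {r : ℝ} (hr : 0 < r) :
    ∃ᶠ z in 𝓝[>] x, slope (fun y => univ.sup' univ_nonempty (f · y)) x z < r := by
  set g : ℝ → ℝ := fun y => univ.sup' univ_nonempty (f · y)
  -- An index inactive at `x` stays below `g x` nearby; an active one has slope near `f' j ≤ 0`.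
  have hlocal : ∀ j, ∀ᶠ z in 𝓝[>] x, slope (f j) x z < r ∨ f j z < g x := by
    intro j
    rcases (le_sup' (f · x) (mem_univ j)).lt_or_eq with hlt | heq
    · exact nhdsWithin_le_nhds <|
        ((hd j).continuousAt.eventually_lt continuousAt_const hlt).mono fun _ => Or.inr
    · have hj : f' j < r := (hmax j fun k => heq ▸ le_sup' (f · x) (mem_univ k)).trans_lt hr
      have hslope : ∀ᶠ z in 𝓝[≠] x, slope (f j) x z < r :=
        (hasDerivAt_iff_tendsto_slope.1 (hd j)).eventually (eventually_lt_nhds hj)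
      exact (hslope.filter_mono (nhdsWithin_mono x fun _ hz => ne_of_gt hz)).mono fun _ => Or.inl
  refine ((eventually_all.2 hlocal).and self_mem_nhdsWithin |>.mono ?_).frequently
  rintro z ⟨hz, hxz : x < z⟩
  obtain ⟨k, -, hk⟩ := exists_mem_eq_sup' univ_nonempty (f · z)
  have hgz : slope g x z = (f k z - g x) / (z - x) := by
    rw [slope_def_field]; simp only [g, hk]
  rcases hz k with hslope | hbelow
  · calc slope g x z = (f k z - g x) / (z - x) := hgz
      _ ≤ (f k z - f k x) / (z - x) := by
        gcongr
        exact le_sup' (f · x) (mem_univ k)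
      _ = slope (f k) x z := (slope_def_field (f k) x z).symm
      _ < r := hslope
  · rw [hgz]
    exact (div_neg_of_neg_of_pos (sub_neg.2 hbelow) (sub_pos.2 hxz)).trans hr

lemma antitone_sup'_of_hasDerivAt {f f' : ι → ℝ → ℝ} (hd : ∀ i x, HasDerivAt (f i) (f' i x) x)
    (hmax : ∀ i x, (∀ j, f j x ≤ f i x) → f' i x ≤ 0) :
    Antitone fun x => univ.sup' univ_nonempty (f · x) := by
  intro s t hst
  have hg : Continuous fun x => univ.sup' univ_nonempty (f · x) :=
    Continuous.finset_sup'_apply _ fun i _ => continuous_iff_continuousAt.2 fun x =>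
      (hd i x).continuousAt
  exact image_le_of_liminf_slope_right_le_deriv_boundary hg.continuousOn le_rfl
    continuousOn_const (fun x _ => hasDerivWithinAt_const x _ _)
    (fun x _ _ hr => frequently_slope_sup'_lt (fun i => hd i x) (fun i => hmax i x) hr)
    (right_mem_Icc.2 hst)

end MaxOfFunctions

section Geometry

variable {E : Type*} [NormedAddCommGroup E] [InnerProductSpace ℝ E]

lemma inner_sub_sub_nonpos_of_norm_le {a b c : E} (h : ‖c - b‖ ≤ ‖a - b‖) :
    inner ℝ (a - b) (c - a) ≤ 0 := by
  have hsplit : c - a = (c - b) - (a - b) := by abel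
  rw [hsplit, inner_sub_right, real_inner_self_eq_norm_mul_norm]
  calc inner ℝ (a - b) (c - b) - ‖a - b‖ * ‖a - b‖
      ≤ ‖a - b‖ * ‖c - b‖ - ‖a - b‖ * ‖a - b‖ := by gcongr; exact real_inner_le_norm _ _
    _ ≤ 0 := by nlinarith [norm_nonneg (a - b)]

lemma inner_sum_smul_sub_nonpos {κ : Type*} {s : Finset κ} {w : κ → ℝ} {x : κ → E} {a b : E}
    (hw : ∀ k ∈ s, 0 ≤ w k) (hx : ∀ k ∈ s, ‖x k - b‖ ≤ ‖a - b‖) :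
    inner ℝ (a - b) (∑ k ∈ s, w k • (x k - a)) ≤ 0 := by
  rw [inner_sum]
  refine sum_nonpos fun k hk => ?_
  rw [real_inner_smul_right]
  exact mul_nonpos_of_nonneg_of_nonpos (hw k hk) (inner_sub_sub_nonpos_of_norm_le (hx k hk))

end Geometry

section Consensus

variable {ι E : Type*} [Fintype ι] [DecidableEq ι] [NormedAddCommGroup E] [InnerProductSpace ℝ E]

/-- The right-hand side `F(η)ᵢ` of the consensus system; a term with `x j = x i` vanishes
because `0⁻¹ = 0`, as in the paper's convention. -/
noncomputable def consensusField (ρ : ι → ι → ℝ → ℝ) (x : ι → E) (i : ι) : E :=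
  ∑ j ∈ univ.erase i, ρ i j ‖x j - x i‖ • ‖x j - x i‖⁻¹ • (x j - x i)

lemma consensusField_eq_sum_smul (ρ : ι → ι → ℝ → ℝ) (x : ι → E) (i : ι) :
    consensusField ρ x i =
      ∑ j ∈ univ.erase i, (ρ i j ‖x j - x i‖ * ‖x j - x i‖⁻¹) • (x j - x i) := by
  simp only [consensusField, smul_smul]

lemma inner_sub_consensusField_nonpos {ρ : ι → ι → ℝ → ℝ}
    (hρ : ∀ i j (r : ℝ), 0 ≤ r → 0 ≤ ρ i j r) {x : ι → E} {i j : ι}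
    (hdiam : ∀ k l, ‖x k - x l‖ ≤ ‖x i - x j‖) :
    inner ℝ (x i - x j) (consensusField ρ x i - consensusField ρ x j) ≤ 0 := by
  have hweight : ∀ a b, 0 ≤ ρ a b ‖x b - x a‖ * ‖x b - x a‖⁻¹ := fun a b =>
    mul_nonneg (hρ a b _ (norm_nonneg _)) (inv_nonneg.2 (norm_nonneg _))
  have hi := inner_sum_smul_sub_nonpos (s := univ.erase i) (b := x j) (fun k _ => hweight i k)
    fun k _ => hdiam k j
  have hj := inner_sum_smul_sub_nonpos (s := univ.erase j) (b := x i) (fun k _ => hweight j k)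
    fun k _ => norm_sub_rev (x i) (x j) ▸ hdiam k i
  rw [← consensusField_eq_sum_smul] at hi hj
  have hswap : inner ℝ (x i - x j) (consensusField ρ x j) =
      -inner ℝ (x j - x i) (consensusField ρ x j) := by
    rw [← inner_neg_left, neg_sub]
  rw [inner_sub_right, hswap]
  linarith

end Consensus

theorem stmt_19_general (p : ℕ) (ρm : Fin p → Fin p → ℝ → ℝ)
    (hnn : ∀ i j (r : ℝ), 0 ≤ r → 0 ≤ ρm i j r)
    (η : Fin p → ℝ → EuclideanSpace ℝ (Fin 2))
    (hode : ∀ i t, HasDerivAt (η i)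
      (∑ j ∈ Finset.univ.erase i,
        ρm i j ‖η j t - η i t‖ • ‖η j t - η i t‖⁻¹ • (η j t - η i t)) t) :
    ∀ s t : ℝ, 0 ≤ s → s ≤ t →
      (⨆ ij : Fin p × Fin p, ‖η ij.1 t - η ij.2 t‖) ≤
        ⨆ ij : Fin p × Fin p, ‖η ij.1 s - η ij.2 s‖ := by
  intro s t _ hst
  rcases isEmpty_or_nonempty (Fin p) with hp | hp
  · simp only [Real.iSup_of_isEmpty, le_refl]
  let F : ℝ → Fin p → EuclideanSpace ℝ (Fin 2) := fun x => consensusField ρm (η · x)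
  have hd : ∀ (ij : Fin p × Fin p) x, HasDerivAt (fun y => ‖η ij.1 y - η ij.2 y‖ ^ 2)
      (2 * inner ℝ (η ij.1 x - η ij.2 x) (F x ij.1 - F x ij.2)) x :=
    fun ij x => ((hode ij.1 x).sub (hode ij.2 x)).norm_sq
  have hmax : ∀ (ij : Fin p × Fin p) x,
      (∀ kl : Fin p × Fin p, ‖η kl.1 x - η kl.2 x‖ ^ 2 ≤ ‖η ij.1 x - η ij.2 x‖ ^ 2) →
        2 * inner ℝ (η ij.1 x - η ij.2 x) (F x ij.1 - F x ij.2) ≤ 0 := fun ij x hij => by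
    have := inner_sub_consensusField_nonpos (x := (η · x)) hnn fun k l =>
      (sq_le_sq₀ (norm_nonneg _) (norm_nonneg _)).1 (hij (k, l))
    linarith
  have hanti := antitone_sup'_of_hasDerivAt hd hmax hst
  refine ciSup_mono_of_forall_exists (Finite.bddAbove_range _) fun ij => ?_
  obtain ⟨kl, -, hkl⟩ := exists_mem_eq_sup' univ_nonempty fun kl : Fin p × Fin p =>
    ‖η kl.1 s - η kl.2 s‖ ^ 2
  exact ⟨kl, (sq_le_sq₀ (norm_nonneg _) (norm_nonneg _)).1
    ((le_sup' (fun kl : Fin p × Fin p => ‖η kl.1 t - η kl.2 t‖ ^ 2) (mem_univ ij)).trans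
      (hanti.trans hkl.le))⟩

theorem stmt_19 (p : ℕ) (ρm : Fin p → Fin p → ℝ → ℝ)
    (hc : ∀ i j, ContinuousOn (ρm i j) (Set.Ici 0))
    (hnn : ∀ i j (r : ℝ), 0 ≤ r → 0 ≤ ρm i j r)
    (h0 : ∀ i j, ρm i j 0 = 0)
    (η : Fin p → ℝ → EuclideanSpace ℝ (Fin 2))
    (hode : ∀ i t, HasDerivAt (η i)
      (∑ j ∈ Finset.univ.erase i,
        ρm i j ‖η j t - η i t‖ • ‖η j t - η i t‖⁻¹ • (η j t - η i t)) t) :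
    ∀ s t : ℝ, 0 ≤ s → s ≤ t →
      (⨆ ij : Fin p × Fin p, ‖η ij.1 t - η ij.2 t‖) ≤
        ⨆ ij : Fin p × Fin p, ‖η ij.1 s - η ij.2 s‖ :=
  stmt_19_general p ρm hnn η hode
end
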